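/- arXiv:2001.00831 — 2 statements merged into one kernel-verified Lean document; each statement's English description precedes it below -/
import Mathlib

section
/- If F : ℝ^d → ℝ is Lipschitz continuous with constant L₀ and η > 0, then for every θ ∈ ℝ^d, E_v[ ‖(F(θ + η v) - F(θ)) · v‖² ] ≤ η² L₀² (d + 4)², where v is a standard Gaussian vector in ℝ^d. -/
open MeasureTheory ProbabilityTheory

/-- Standard Gaussian measure `N(0, I_d)` on `ℝ^d`. -/
noncomputable def stdGaussian (d : ℕ) : Measure (EuclideanSpace ℝ (Fin d)) :=
  (Measure.pi fun _ : Fin d => gaussianReal 0 1).map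
    (EuclideanSpace.equiv (Fin d) ℝ).symm

/-! By the Lipschitz bound the integrand is at most `η² L₀² ‖v‖⁴`. Moreover `‖v‖²` is a sum of `d`
independent squares of standard normals, each of mean `1` and variance `E[x⁴] - 1 = 2`, the
Gaussian moments `E[x^(2k)] = (2k - 1)‼` coming from the Gamma integral. Hence
`E‖v‖⁴ = Var ‖v‖² + (E‖v‖²)² = d (d + 2) ≤ (d + 4)²`. -/

open Real Set
open scoped Nat

theorem integral_pow_two_mul_mul_exp_neg_half_sq (k : ℕ) :
    ∫ x : ℝ, x ^ (2 * k) * rexp (-(1 / 2) * x ^ 2) = (2 * k - 1 : ℕ)‼ * √(2 * π) := by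
  have hIoi := integral_rpow_mul_exp_neg_mul_rpow (p := 2) (q := 2 * k) (b := 1 / 2)
    two_pos (neg_one_lt_zero.trans_le (by positivity)) (by norm_num)
  have hq : ((2 * k : ℝ) + 1) / 2 = k + 1 / 2 := by ring
  have hq' : -((2 * k : ℝ) + 1) / 2 = -(k + 1 / 2) := by ring
  have hpow : (1 / 2 : ℝ) ^ (-(k + 1 / 2 : ℝ)) = 2 ^ k * √2 := by
    rw [one_div, inv_rpow zero_le_two, ← rpow_neg zero_le_two, neg_neg, rpow_add two_pos,
      rpow_natCast, sqrt_eq_rpow, one_div]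
  rw [hq, hq', hpow, Gamma_nat_add_half] at hIoi
  calc ∫ x : ℝ, x ^ (2 * k) * rexp (-(1 / 2) * x ^ 2)
      = ∫ x : ℝ, |x| ^ (2 * k) * rexp (-(1 / 2) * |x| ^ 2) := by
        simp_rw [pow_mul, sq_abs]
    _ = 2 * ∫ x in Ioi (0 : ℝ), x ^ (2 * (k : ℝ)) * rexp (-(1 / 2) * x ^ (2 : ℝ)) := by
        rw [integral_comp_abs (f := fun x => x ^ (2 * k) * rexp (-(1 / 2) * x ^ 2))]
        congr 1
        refine setIntegral_congr_fun measurableSet_Ioi fun x _ => ?_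
        norm_cast
    _ = (2 * k - 1 : ℕ)‼ * √(2 * π) := by
        rw [hIoi, sqrt_mul zero_le_two]
        field_simp

theorem integral_pow_two_mul_gaussianReal (k : ℕ) :
    ∫ x, x ^ (2 * k) ∂gaussianReal 0 1 = (2 * k - 1 : ℕ)‼ := by
  have hpdf (x : ℝ) : gaussianPDFReal 0 1 x = (√(2 * π))⁻¹ * rexp (-(1 / 2) * x ^ 2) := by
    simp only [gaussianPDFReal, NNReal.coe_one, mul_one, sub_zero]
    ring_nf
  simp_rw [integral_gaussianReal_eq_integral_smul one_ne_zero, hpdf, smul_eq_mul, mul_assoc,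
    mul_comm (rexp _)]
  rw [integral_const_mul, integral_pow_two_mul_mul_exp_neg_half_sq]
  have : 0 < √(2 * π) := by positivity
  field_simp

theorem integral_sq_gaussianReal : ∫ x, x ^ 2 ∂gaussianReal 0 1 = 1 := by
  simpa using integral_pow_two_mul_gaussianReal 1

theorem integral_pow_four_gaussianReal : ∫ x, x ^ 4 ∂gaussianReal 0 1 = 3 := by
  simpa [Nat.doubleFactorial] using integral_pow_two_mul_gaussianReal 2

theorem integrable_pow_gaussianReal (μ : ℝ) (v : NNReal) (n : ℕ) :
    Integrable (fun x : ℝ => x ^ n) (gaussianReal μ v) :=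
  integrable_pow_of_mem_interior_integrableExpSet (X := id) (by simp) n

theorem memLp_sq_gaussianReal (μ : ℝ) (v : NNReal) :
    MemLp (fun x : ℝ => x ^ 2) 2 (gaussianReal μ v) := by
  rw [memLp_two_iff_integrable_sq (by fun_prop)]
  simp_rw [← pow_mul]
  exact integrable_pow_gaussianReal μ v _

theorem variance_sq_gaussianReal : Var[fun x : ℝ => x ^ 2; gaussianReal 0 1] = 2 := by
  rw [variance_eq_sub (memLp_sq_gaussianReal 0 1)]
  simp_rw [Pi.pow_apply, ← pow_mul]
  rw [integral_pow_four_gaussianReal, integral_sq_gaussianReal]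
  norm_num

section Pi

variable {ι : Type*} [Fintype ι]

theorem memLp_sum_sq_pi_gaussianReal :
    MemLp (∑ i, fun x : ι → ℝ => x i ^ 2) 2 (Measure.pi fun _ => gaussianReal 0 1) :=
  memLp_finsetSum' _ fun i _ =>
    (memLp_sq_gaussianReal 0 1).comp_measurePreserving (measurePreserving_eval _ i)

theorem integral_sum_sq_pi_gaussianReal :
    ∫ x, ∑ i : ι, x i ^ 2 ∂(Measure.pi fun _ => gaussianReal 0 1) = Fintype.card ι := by
  rw [integral_finsetSum (f := fun i (x : ι → ℝ) => x i ^ 2) _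
    fun i _ => integrable_comp_eval (X := fun _ => ℝ) (i := i) (f := fun t => t ^ 2)
      (integrable_pow_gaussianReal 0 1 2)]
  calc ∑ i, ∫ x, x i ^ 2 ∂(Measure.pi fun _ => gaussianReal 0 1) = ∑ _ : ι, (1 : ℝ) :=
        Finset.sum_congr rfl fun i _ => by
          rw [integral_comp_eval (X := fun _ => ℝ) (i := i) (f := fun t => t ^ 2) (by fun_prop),
            integral_sq_gaussianReal]
    _ = Fintype.card ι := by simp

theorem integral_sum_sq_sq_pi_gaussianReal :
    ∫ x, (∑ i : ι, x i ^ 2) ^ 2 ∂(Measure.pi fun _ => gaussianReal 0 1)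
      = Fintype.card ι * (Fintype.card ι + 2) := by
  have hvar := variance_sum_pi (μ := fun _ : ι => gaussianReal 0 1)
    (fun _ => memLp_sq_gaussianReal 0 1)
  rw [variance_eq_sub memLp_sum_sq_pi_gaussianReal] at hvar
  simp only [Finset.sum_apply, Pi.pow_apply, integral_sum_sq_pi_gaussianReal,
    variance_sq_gaussianReal, Finset.sum_const, Finset.card_univ, nsmul_eq_mul] at hvar
  linarith

theorem norm_pow_four_euclideanSpace_equiv_symm (x : ι → ℝ) :
    ‖(EuclideanSpace.equiv ι ℝ).symm x‖ ^ 4 = (∑ i, x i ^ 2) ^ 2 := by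
  rw [show 4 = 2 * 2 from rfl, pow_mul, EuclideanSpace.real_norm_sq_eq]
  rfl

end Pi

theorem integrable_norm_pow_four_stdGaussian (d : ℕ) :
    Integrable (fun v => ‖v‖ ^ 4) (stdGaussian d) := by
  rw [_root_.stdGaussian, integrable_map_measure (by fun_prop) (by fun_prop)]
  simp_rw [Function.comp_def, norm_pow_four_euclideanSpace_equiv_symm]
  simpa using memLp_sum_sq_pi_gaussianReal.integrable_sq

theorem integral_norm_pow_four_stdGaussian (d : ℕ) :
    ∫ v, ‖v‖ ^ 4 ∂(stdGaussian d) = d * (d + 2) := by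
  rw [_root_.stdGaussian, integral_map (by fun_prop) (by fun_prop)]
  simp_rw [norm_pow_four_euclideanSpace_equiv_symm]
  simpa using integral_sum_sq_sq_pi_gaussianReal (ι := Fin d)

theorem sq_norm_sub_smul_le_of_lipschitz {E : Type*} [NormedAddCommGroup E] [NormedSpace ℝ E]
    {F : E → ℝ} {L₀ : ℝ} (hL : ∀ x y, |F x - F y| ≤ L₀ * ‖x - y‖) (η : ℝ) (θ v : E) :
    ‖(F (θ + η • v) - F θ) • v‖ ^ 2 ≤ η ^ 2 * L₀ ^ 2 * ‖v‖ ^ 4 := by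
  have hF : |F (θ + η • v) - F θ| ≤ L₀ * (|η| * ‖v‖) := by
    simpa [norm_smul] using hL (θ + η • v) θ
  calc ‖(F (θ + η • v) - F θ) • v‖ ^ 2 = |F (θ + η • v) - F θ| ^ 2 * ‖v‖ ^ 2 := by
        rw [norm_smul, mul_pow, Real.norm_eq_abs]
    _ ≤ (L₀ * (|η| * ‖v‖)) ^ 2 * ‖v‖ ^ 2 := by gcongr
    _ = η ^ 2 * L₀ ^ 2 * ‖v‖ ^ 4 := by rw [← sq_abs η]; ring

theorem second_moment_bound_general (d : ℕ) (F : EuclideanSpace ℝ (Fin d) → ℝ) (L₀ η : ℝ)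
    (hL : ∀ x y, |F x - F y| ≤ L₀ * ‖x - y‖)
    (θ : EuclideanSpace ℝ (Fin d)) :
    (∫ v, ‖(F (θ + η • v) - F θ) • v‖ ^ 2 ∂(stdGaussian d))
      ≤ η ^ 2 * L₀ ^ 2 * ((d : ℝ) + 4) ^ 2 := by
  calc ∫ v, ‖(F (θ + η • v) - F θ) • v‖ ^ 2 ∂(stdGaussian d)
      ≤ ∫ v, η ^ 2 * L₀ ^ 2 * ‖v‖ ^ 4 ∂(stdGaussian d) :=
        integral_mono_of_nonneg (.of_forall fun _ => by positivity)
          ((integrable_norm_pow_four_stdGaussian d).const_mul _)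
          (.of_forall (sq_norm_sub_smul_le_of_lipschitz hL η θ))
    _ = η ^ 2 * L₀ ^ 2 * (d * (d + 2)) := by
        rw [integral_const_mul, integral_norm_pow_four_stdGaussian]
    _ ≤ η ^ 2 * L₀ ^ 2 * ((d : ℝ) + 4) ^ 2 := by gcongr; nlinarith

theorem second_moment_bound (d : ℕ) (F : EuclideanSpace ℝ (Fin d) → ℝ) (L₀ η : ℝ)
    (hL : ∀ x y, |F x - F y| ≤ L₀ * ‖x - y‖) (hη : 0 < η)
    (θ : EuclideanSpace ℝ (Fin d)) :
    (∫ v, ‖(F (θ + η • v) - F θ) • v‖ ^ 2 ∂(stdGaussian d))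
      ≤ η ^ 2 * L₀ ^ 2 * ((d : ℝ) + 4) ^ 2 :=
  second_moment_bound_general d F L₀ η hL θ
end

section
/- (Interchange of gradient and expectation for convex integrands) Let F̄ : ℝ^d × Ω → ℝ be convex in θ for every ω, with F(θ) = E[F̄(θ, ω)] finite in a neighborhood of an interior point θ₀. If F̄(·, ω) is differentiable at θ₀ for a.e. ω and F is differentiable at θ₀, then ∇F(θ₀) = E[∇_θ F̄(θ₀, ω)]. -/
/-!
Convexity gives the subgradient inequality `F̄(θ, ω) ≥ F̄(θ₀, ω) + ⟪∇F̄(θ₀, ω), θ - θ₀⟫`.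
Applied at `θ₀ ± c v` it sandwiches every directional derivative of `F̄(·, ω)` at `θ₀` between
integrable difference quotients, so `∇F̄(θ₀, ·)` is integrable; integrating the inequality then
shows that `E[∇F̄(θ₀, ·)]` is a subgradient of `F` at `θ₀`, and the only subgradient of a
function differentiable at a point is its gradient.
-/

open MeasureTheory Filter Topology Set
open scoped RealInnerProductSpace

section Convex

variable {E : Type*} [NormedAddCommGroup E] {f : E → ℝ} {x y : E}

theorem ConvexOn.add_fderiv_sub_le [NormedSpace ℝ E] {s : Set E} (hf : ConvexOn ℝ s f)
    (hx : x ∈ s) (hy : y ∈ s) (hd : DifferentiableAt ℝ f x) :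
    f x + fderiv ℝ f x (y - x) ≤ f y := by
  set φ := f ∘ AffineMap.lineMap (k := ℝ) x y
  have hφ : ConvexOn ℝ (AffineMap.lineMap x y ⁻¹' s) φ := hf.comp_affineMap _
  have hderiv : HasDerivAt φ (fderiv ℝ f x (y - x)) 0 := by
    have hφ_eq : φ = fun t : ℝ => f (x + t • (y - x)) := by
      ext t; simp [φ, AffineMap.lineMap_apply_module', add_comm]
    rw [hφ_eq]
    exact hd.hasFDerivAt.hasLineDerivAt (y - x)
  have hslope := hφ.le_slope_of_hasDerivAt (by simpa using hx) (by simpa using hy) one_pos hderiv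
  simp only [slope, sub_zero, inv_one, Function.comp_apply, AffineMap.lineMap_apply_one,
    AffineMap.lineMap_apply_zero, vsub_eq_sub, smul_eq_mul, one_mul, φ] at hslope
  linarith

theorem gradient_eq_of_eventually_add_inner_le [InnerProductSpace ℝ E] [CompleteSpace E] {g : E}
    (hd : DifferentiableAt ℝ f x) (h : ∀ᶠ y in 𝓝 x, f x + ⟪g, y - x⟫ ≤ f y) :
    gradient f x = g := by
  have hmin : IsLocalMin (fun y => f y - ⟪g, y - x⟫) x := by
    filter_upwards [h] with y hy
    simp only [sub_self, inner_zero_right, sub_zero]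
    linarith
  have hderiv : HasFDerivAt (fun y => f y - ⟪g, y - x⟫) (fderiv ℝ f x - innerSL ℝ g) x :=
    hd.hasFDerivAt.sub ((innerSL ℝ g).hasFDerivAt.comp x ((hasFDerivAt_id x).sub_const x))
  have hzero := hmin.hasFDerivAt_eq_zero hderiv
  refine ext_inner_right ℝ fun v => ?_
  simpa [inner_gradient_left, sub_eq_zero] using DFunLike.congr_fun hzero v

end Convex

section Integral

variable {E Ω : Type*} [NormedAddCommGroup E] [NormedSpace ℝ E] [MeasurableSpace Ω]
  {P : Measure Ω} {f : E → Ω → ℝ} {x : E}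

theorem aestronglyMeasurable_fderiv_apply (hmeas : ∀ᶠ y in 𝓝 x, AEStronglyMeasurable (f y) P)
    (hdiff : ∀ᵐ ω ∂P, DifferentiableAt ℝ (f · ω) x) (v : E) :
    AEStronglyMeasurable (fun ω => fderiv ℝ (f · ω) x v) P := by
  have hline : Tendsto (fun t : ℝ => x + t • v) (𝓝[≠] 0) (𝓝 x) :=
    (Continuous.tendsto' (by fun_prop) 0 x (by simp)).mono_left nhdsWithin_le_nhds
  obtain ⟨t, ht⟩ := exists_seq_tendsto (𝓝[≠] (0 : ℝ))
  -- shift the null sequence `t` so that every difference quotient involves a measurable `f y`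
  obtain ⟨N, hN⟩ := eventually_atTop.1 (ht.eventually (hline.eventually hmeas))
  have htN := ht.comp (tendsto_add_atTop_nat N)
  refine aestronglyMeasurable_of_tendsto_ae atTop
    (f := fun n ω => (t (n + N))⁻¹ • (f (x + t (n + N) • v) ω - f x ω))
    (fun n => ((hN _ (Nat.le_add_left N n)).sub hmeas.self_of_nhds).const_smul (t (n + N))⁻¹) ?_
  filter_upwards [hdiff] with ω hω
  exact (hω.hasFDerivAt.hasLineDerivAt v).tendsto_slope_zero.comp htN

theorem integrable_fderiv_apply (hconv : ∀ ω, ConvexOn ℝ univ (f · ω))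
    (hint : ∀ᶠ y in 𝓝 x, Integrable (f y) P) (hdiff : ∀ᵐ ω ∂P, DifferentiableAt ℝ (f · ω) x)
    (v : E) : Integrable (fun ω => fderiv ℝ (f · ω) x v) P := by
  obtain ⟨c, ⟨hplus, hminus⟩, hc⟩ :
      ∃ c : ℝ, (Integrable (f (x + c • v)) P ∧ Integrable (f (x + c • -v)) P) ∧ 0 < c := by
    have hline (w : E) : Tendsto (fun t : ℝ => x + t • w) (𝓝[>] 0) (𝓝 x) :=
      (Continuous.tendsto' (by fun_prop) 0 x (by simp)).mono_left nhdsWithin_le_nhds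
    exact (((hline v).eventually hint).and ((hline (-v)).eventually hint)
      |>.and self_mem_nhdsWithin).exists
  have hsub (w : E) : ∀ᵐ ω ∂P, fderiv ℝ (f · ω) x w ≤ f (x + w) ω - f x ω := by
    filter_upwards [hdiff] with ω hω
    have := (hconv ω).add_fderiv_sub_le (mem_univ x) (mem_univ (x + w)) hω
    rw [add_sub_cancel_left] at this
    linarith
  have hcv : Integrable (fun ω => fderiv ℝ (f · ω) x (c • v)) P := by
    refine integrable_of_le_of_le (aestronglyMeasurable_fderiv_apply
      (hint.mono fun y hy => hy.aestronglyMeasurable) hdiff _) ?_ (hsub (c • v))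
      (hint.self_of_nhds.sub hminus) (hplus.sub hint.self_of_nhds)
    filter_upwards [hsub (c • -v)] with ω hω
    simp only [smul_neg, map_neg, Pi.sub_apply] at hω ⊢
    linarith
  refine (hcv.const_mul c⁻¹).congr (ae_of_all _ fun ω => ?_)
  simp [inv_mul_cancel_left₀ hc.ne']

end Integral

section Gradient

variable {E Ω : Type*} [NormedAddCommGroup E] [InnerProductSpace ℝ E] [FiniteDimensional ℝ E]
  [MeasurableSpace Ω] {P : Measure Ω}

theorem integrable_of_forall_integrable_inner {G : Ω → E}
    (h : ∀ v, Integrable (fun ω => ⟪G ω, v⟫) P) : Integrable G P := by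
  let b := stdOrthonormalBasis ℝ E
  have hG : G = fun ω => ∑ i, ⟪b i, G ω⟫ • b i := funext fun ω => (b.sum_repr' (G ω)).symm
  rw [hG]
  exact integrable_finsetSum _ fun i _ => ((h (b i)).congr
    (ae_of_all _ fun ω => real_inner_comm _ _)).smul_const (b i)

theorem gradient_integral_eq_integral_gradient {f : E → Ω → ℝ} {x : E}
    (hconv : ∀ ω, ConvexOn ℝ univ (f · ω)) (hint : ∀ᶠ y in 𝓝 x, Integrable (f y) P)
    (hdiff : ∀ᵐ ω ∂P, DifferentiableAt ℝ (f · ω) x)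
    (hFdiff : DifferentiableAt ℝ (fun y => ∫ ω, f y ω ∂P) x) :
    gradient (fun y => ∫ ω, f y ω ∂P) x = ∫ ω, gradient (f · ω) x ∂P := by
  have hG : Integrable (fun ω => gradient (f · ω) x) P :=
    integrable_of_forall_integrable_inner fun v => by
      simpa only [inner_gradient_left] using integrable_fderiv_apply hconv hint hdiff v
  refine gradient_eq_of_eventually_add_inner_le hFdiff ?_
  filter_upwards [hint] with y hy
  rw [real_inner_comm, ← integral_inner hG,
    ← integral_add hint.self_of_nhds (hG.const_inner (y - x))]
  refine integral_mono_ae (hint.self_of_nhds.add (hG.const_inner (y - x))) hy ?_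
  filter_upwards [hdiff] with ω hω
  rw [real_inner_comm, inner_gradient_left]
  exact (hconv ω).add_fderiv_sub_le (mem_univ x) (mem_univ y) hω

end Gradient

theorem interchange_gradient_expectation_general (d : ℕ) {Ω : Type*} [MeasurableSpace Ω]
    (P : Measure Ω)
    (Fbar : EuclideanSpace ℝ (Fin d) → Ω → ℝ)
    (θ₀ : EuclideanSpace ℝ (Fin d))
    (hconv : ∀ ω, ConvexOn ℝ Set.univ fun θ => Fbar θ ω)
    (hint : ∃ ε > 0, ∀ θ ∈ Metric.ball θ₀ ε, Integrable (fun ω => Fbar θ ω) P)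
    (hdiff : ∀ᵐ ω ∂P, DifferentiableAt ℝ (fun θ => Fbar θ ω) θ₀)
    (hFdiff : DifferentiableAt ℝ (fun θ => ∫ ω, Fbar θ ω ∂P) θ₀) :
    gradient (fun θ => ∫ ω, Fbar θ ω ∂P) θ₀
      = ∫ ω, gradient (fun θ => Fbar θ ω) θ₀ ∂P := by
  obtain ⟨ε, hε, hball⟩ := hint
  exact gradient_integral_eq_integral_gradient hconv
    (eventually_of_mem (Metric.ball_mem_nhds θ₀ hε) hball) hdiff hFdiff

theorem interchange_gradient_expectation (d : ℕ) {Ω : Type*} [MeasurableSpace Ω]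
    (P : Measure Ω) [IsProbabilityMeasure P]
    (Fbar : EuclideanSpace ℝ (Fin d) → Ω → ℝ)
    (θ₀ : EuclideanSpace ℝ (Fin d))
    (hconv : ∀ ω, ConvexOn ℝ Set.univ fun θ => Fbar θ ω)
    (hint : ∃ ε > 0, ∀ θ ∈ Metric.ball θ₀ ε, Integrable (fun ω => Fbar θ ω) P)
    (hdiff : ∀ᵐ ω ∂P, DifferentiableAt ℝ (fun θ => Fbar θ ω) θ₀)
    (hFdiff : DifferentiableAt ℝ (fun θ => ∫ ω, Fbar θ ω ∂P) θ₀) :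
    gradient (fun θ => ∫ ω, Fbar θ ω ∂P) θ₀
      = ∫ ω, gradient (fun θ => Fbar θ ω) θ₀ ∂P :=
  interchange_gradient_expectation_general d P Fbar θ₀ hconv hint hdiff hFdiff
end
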